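/- arXiv:1703.03380 — 3 statements merged into one kernel-verified Lean document; each statement's English description precedes it below -/
import Mathlib

section
/- Every nonempty compact set Γ ⊆ ℝ^N satisfying Γ = S₁ '' Γ ∪ S₂ '' Γ is contained in the subspace P. (Lemma 2.3, second assertion.) -/
open Set Filter

noncomputable section

abbrev E (N : ℕ) := EuclideanSpace ℝ (Fin N)

/-- Vertex `p_j` of the regular simplex. -/
def gPt (N : ℕ) (j : Fin N) : E N :=
  (Real.sqrt 2)⁻¹ • (EuclideanSpace.single j (1 : ℝ) -
    (N : ℝ)⁻¹ • ∑ i : Fin N, EuclideanSpace.single i (1 : ℝ))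

/-- The affine map `S_j`. -/
def gS (N : ℕ) (j : Fin N) (x : E N) : E N :=
  ((N : ℝ) + 2)⁻¹ • x +
    (((N : ℝ) + 2)⁻¹ * (2 + ((N : ℝ) - 1) * (inner ℝ x (gPt N j) : ℝ) / ‖gPt N j‖ ^ 2)) • gPt N j

/-- Subspace `P`, the span of `p₁, p₂`. -/
def gP (N : ℕ) (hN : 2 ≤ N) : Submodule ℝ (E N) :=
  Submodule.span ℝ {gPt N ⟨0, by omega⟩, gPt N ⟨1, by omega⟩}

/-! Let `Q` be the orthogonal projection onto `Pᗮ`. Both `S₁` and `S₂` move points parallel to `P`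
and scale by `(N+2)⁻¹`, so `‖Q (S_j x)‖ = (N+2)⁻¹ ‖Q x‖` for `j = 1, 2`. On an invariant compact set
every point is such an image of another point of the set, so the maximum of `‖Q ·‖` over it is at
most `(N+2)⁻¹` times itself, hence zero. -/

theorem IsCompact.le_zero_of_forall_exists_le_mul {X : Type*} [TopologicalSpace X] {Γ : Set X}
    (hΓ : IsCompact Γ) {f : X → ℝ} (hf : ContinuousOn f Γ) {c : ℝ} (hc₀ : 0 ≤ c) (hc₁ : c < 1)
    (h : ∀ x ∈ Γ, ∃ y ∈ Γ, f x ≤ c * f y) {x : X} (hx : x ∈ Γ) : f x ≤ 0 := by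
  obtain ⟨x₀, hx₀, hmax⟩ := hΓ.exists_isMaxOn ⟨x, hx⟩ hf
  obtain ⟨y, hy, hxy⟩ := h x₀ hx₀
  have hx₀c : f x₀ ≤ c * f x₀ := hxy.trans (mul_le_mul_of_nonneg_left (hmax hy) hc₀)
  have hx₀ : f x₀ ≤ 0 := by nlinarith
  exact (hmax hx).trans hx₀

theorem map_gS_of_map_gPt_eq_zero {N : ℕ} {F M : Type*} [AddCommGroup F] [Module ℝ F]
    [FunLike M (E N) F] [LinearMapClass M ℝ (E N) F] (L : M) {j : Fin N}
    (hj : L (gPt N j) = 0) (x : E N) :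
    L (gS N j x) = ((N : ℝ) + 2)⁻¹ • L x := by
  simp [gS, hj]

theorem norm_starProjection_orthogonal_gS {N : ℕ} {K : Submodule ℝ (E N)} {j : Fin N}
    (hj : gPt N j ∈ K) (x : E N) :
    ‖Kᗮ.starProjection (gS N j x)‖ = ((N : ℝ) + 2)⁻¹ * ‖Kᗮ.starProjection x‖ := by
  have hQj : Kᗮ.starProjection (gPt N j) = 0 :=
    (Submodule.starProjection_apply_eq_zero_iff _).mpr (K.le_orthogonal_orthogonal hj)
  rw [map_gS_of_map_gPt_eq_zero _ hQj, norm_smul, Real.norm_of_nonneg (by positivity)]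

/-- any nonempty compact set invariant under `{S₁, S₂}` lies in `P`. -/
theorem attractor_subset_P (N : ℕ) (hN : 2 ≤ N) (Γ : Set (E N))
    (hc : IsCompact Γ)
    (hinv : Γ = gS N ⟨0, by omega⟩ '' Γ ∪ gS N ⟨1, by omega⟩ '' Γ) :
    Γ ⊆ (gP N hN : Set (E N)) := by
  set Q := (gP N hN)ᗮ.starProjection
  have hcontract : ∀ x ∈ Γ, ∃ y ∈ Γ, ‖Q x‖ ≤ ((N : ℝ) + 2)⁻¹ * ‖Q y‖ := by
    intro x hx
    rw [hinv] at hx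
    rcases hx with ⟨y, hy, rfl⟩ | ⟨y, hy, rfl⟩
    · exact ⟨y, hy, (norm_starProjection_orthogonal_gS (Submodule.subset_span (by simp)) y).le⟩
    · exact ⟨y, hy, (norm_starProjection_orthogonal_gS (Submodule.subset_span (by simp)) y).le⟩
  intro x hx
  have hQx : ‖Q x‖ ≤ 0 := hc.le_zero_of_forall_exists_le_mul (by fun_prop) (by positivity)
    (inv_lt_one_of_one_lt₀ (by linarith)) hcontract hx
  rw [SetLike.mem_coe, ← (gP N hN).orthogonal_orthogonal,
    ← Submodule.starProjection_apply_eq_zero_iff]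
  exact norm_le_zero_iff.mp hQx
end
end

section
/- Assume N ≥ 3. For all j, k with 3 ≤ j, k ≤ N one has Π(p_j) = Π(p_k); writing p = Π(p₃) for this common point, moreover ‖p₁ − p‖ = ‖p₂ − p‖. (Lemma 2.3, last assertion.) -/
open Set Filter

noncomputable section

/-- Orthogonal projection onto `P`. -/
def gProj (N : ℕ) (hN : 2 ≤ N) (x : E N) : E N :=
  (Submodule.orthogonalProjectionOnto (gP N hN) x : E N)

/-!
The vertices have Gram matrix `⟪p_j, p_k⟫ = (δ_jk - 1/N)/2`. Hence for `j, k ≥ 3` the difference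
`p_j - p_k` is orthogonal to `p₁` and `p₂`, i.e. to `P`, so `Π p_j = Π p_k`. Moreover `p₁, p₂ ∈ P`
have equal norms and equal inner products with `p₃`, hence with `p = Π p₃`, so expanding
`‖p_i - p‖²` gives `‖p₁ - p‖ = ‖p₂ - p‖`.
-/

open Submodule in
theorem Submodule.orthogonalProjectionOnto_span_eq_of_inner_sub {𝕜 F : Type*} [RCLike 𝕜]
    [NormedAddCommGroup F] [InnerProductSpace 𝕜 F] {s : Set F}
    [(span 𝕜 s).HasOrthogonalProjection] {x y : F} (h : ∀ v ∈ s, inner 𝕜 v (x - y) = 0) :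
    (span 𝕜 s).orthogonalProjectionOnto x = (span 𝕜 s).orthogonalProjectionOnto y := by
  have hortho : span 𝕜 {x - y} ⟂ span 𝕜 s := by
    rw [isOrtho_span]
    rintro _ rfl v hv
    exact inner_eq_zero_symm.mp (h v hv)
  rw [← sub_eq_zero, ← map_sub]
  exact orthogonalProjectionOnto_apply_of_mem_orthogonal
    ((span_singleton_le_iff_mem _ _).mp (isOrtho_iff_le.mp hortho))

theorem Submodule.norm_sub_orthogonalProjectionOnto_eq {F : Type*} [NormedAddCommGroup F]
    [InnerProductSpace ℝ F] {K : Submodule ℝ F} [K.HasOrthogonalProjection] {a b x : F}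
    (ha : a ∈ K) (hb : b ∈ K) (hab : ‖a‖ = ‖b‖) (hx : inner ℝ a x = inner ℝ b x) :
    ‖a - K.orthogonalProjectionOnto x‖ = ‖b - K.orthogonalProjectionOnto x‖ := by
  have hproj : ∀ c ∈ K, inner ℝ c (K.orthogonalProjectionOnto x : F) = inner ℝ c x :=
    fun c hc ↦ inner_orthogonalProjectionOnto_eq_of_mem_left ⟨c, hc⟩ x
  rw [← sq_eq_sq₀ (norm_nonneg _) (norm_nonneg _), norm_sub_sq_real, norm_sub_sq_real,
    hproj a ha, hproj b hb, hab, hx]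

theorem inner_gPt (N : ℕ) (j k : Fin N) :
    inner ℝ (gPt N j) (gPt N k) = ((if j = k then 1 else 0) - (N : ℝ)⁻¹) / 2 := by
  have hN : (N : ℝ) ≠ 0 := Nat.cast_ne_zero.mpr j.pos.ne'
  unfold gPt
  set s : E N := ∑ i : Fin N, EuclideanSpace.single i 1 with hs
  have hee : inner ℝ (EuclideanSpace.single j (1 : ℝ)) (EuclideanSpace.single k (1 : ℝ)) =
      if j = k then 1 else 0 := by
    simp [EuclideanSpace.inner_single_left, PiLp.single_apply]
  have hes : ∀ a, inner ℝ (EuclideanSpace.single a (1 : ℝ)) s = 1 := by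
    simp [hs, EuclideanSpace.inner_single_left]
  have hse : ∀ a, inner ℝ s (EuclideanSpace.single a (1 : ℝ)) = 1 := fun a ↦ by
    rw [real_inner_comm, hes]
  have hss : inner ℝ s s = N := by
    rw [hs, sum_inner, ← hs]
    simp [hes]
  simp only [real_inner_smul_left, real_inner_smul_right, inner_sub_left, inner_sub_right,
    hee, hes, hse, hss]
  field_simp
  rw [Real.sq_sqrt zero_le_two]
  ring

theorem inner_gPt_of_ne {N : ℕ} {i j : Fin N} (h : i ≠ j) :
    inner ℝ (gPt N i) (gPt N j) = -(N : ℝ)⁻¹ / 2 := by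
  rw [inner_gPt, if_neg h, zero_sub]

theorem inner_gPt_sub_gPt_eq_zero {N : ℕ} {i j k : Fin N} (hj : i ≠ j) (hk : i ≠ k) :
    inner ℝ (gPt N i) (gPt N j - gPt N k) = 0 := by
  rw [inner_sub_right, inner_gPt_of_ne hj, inner_gPt_of_ne hk, sub_self]

theorem norm_gPt_eq {N : ℕ} (j k : Fin N) : ‖gPt N j‖ = ‖gPt N k‖ := by
  rw [norm_eq_sqrt_real_inner, norm_eq_sqrt_real_inner, inner_gPt, inner_gPt, if_pos rfl,
    if_pos rfl]

/-- for `j, k ≥ 3` one has `Π(p_j) = Π(p_k)`, and with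
`p = Π(p₃)` one has `‖p₁ − p‖ = ‖p₂ − p‖`. -/
theorem proj_of_other_vertices (N : ℕ) (hN : 3 ≤ N) :
    (∀ j k : Fin N, 2 ≤ (j : ℕ) → 2 ≤ (k : ℕ) →
      gProj N (by omega) (gPt N j) = gProj N (by omega) (gPt N k)) ∧
    ‖gPt N ⟨0, by omega⟩ - gProj N (by omega) (gPt N ⟨2, by omega⟩)‖ =
      ‖gPt N ⟨1, by omega⟩ - gProj N (by omega) (gPt N ⟨2, by omega⟩)‖ := by
  constructor
  · intro j k hj hk
    refine congrArg Subtype.val (Submodule.orthogonalProjectionOnto_span_eq_of_inner_sub ?_)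
    rintro v (rfl | rfl)
    all_goals
      exact inner_gPt_sub_gPt_eq_zero
        (by simp [Fin.ext_iff]; omega) (by simp [Fin.ext_iff]; omega)
  · refine Submodule.norm_sub_orthogonalProjectionOnto_eq (Submodule.subset_span (by simp))
      (Submodule.subset_span (by simp)) (norm_gPt_eq _ _) ?_
    rw [inner_gPt_of_ne (by simp), inner_gPt_of_ne (by simp)]
end
end

section
/- The simplex Δ = convexHull ℝ {p₁, …, p_N} is invariant under each S_j, i.e. S_j '' Δ ⊆ Δ for every 1 ≤ j ≤ N; consequently every nonempty compact set X with X = ⋃_{j=1}^N S_j '' X satisfies X ⊆ Δ. (Supporting claim used in the proof of Lemma 2.8.) -/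
/-!
Each `S_j` is affine, fixes `p_j` and sends `p_i` (`i ≠ j`) to `(p_i + p_j)/(N + 2)`, which lies
on the segment from the centroid `0` of the simplex to the midpoint of `p_i p_j`; hence `S_j` maps
`Δ` into itself. Its linear part is `1/(N + 2)` times the identity plus a rank-one term along
`p_j`, so by Cauchy–Schwarz `S_j` is a contraction with ratio `N/(N + 2)`. If `X` is compact with
`X = ⋃ S_j X`, a point `x₀ ∈ X` farthest from `Δ` is `S_j y` with `y ∈ X`, and
`d(x₀, Δ) ≤ N/(N + 2) · d(y, Δ) ≤ N/(N + 2) · d(x₀, Δ)` forces `d(x₀, Δ) = 0`.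
-/

open Set Filter

noncomputable section

open scoped NNReal

section Contraction

variable {α ι : Type*} [MetricSpace α]

theorem Metric.infDist_apply_le_mul_of_mapsTo {f : α → α} {K : ℝ≥0} (hf : LipschitzWith K f)
    {S : Set α} (hS : IsCompact S) (hSne : S.Nonempty) (hfS : MapsTo f S S) (y : α) :
    Metric.infDist (f y) S ≤ K * Metric.infDist y S := by
  obtain ⟨z, hz, hyz⟩ := hS.exists_infDist_eq_dist hSne y
  calc Metric.infDist (f y) S ≤ dist (f y) (f z) := Metric.infDist_le_dist_of_mem (hfS hz)
    _ ≤ K * dist y z := hf.dist_le_mul y z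
    _ = K * Metric.infDist y S := by rw [hyz]

theorem subset_of_subset_iUnion_image_of_mapsTo {f : ι → α → α} {K : ℝ≥0}
    (hf : ∀ j, ContractingWith K (f j)) {S X : Set α} (hS : IsCompact S) (hSne : S.Nonempty)
    (hfS : ∀ j, MapsTo (f j) S S) (hX : IsCompact X) (hXf : X ⊆ ⋃ j, f j '' X) : X ⊆ S := by
  rcases X.eq_empty_or_nonempty with rfl | hXne
  · exact empty_subset S
  obtain ⟨x₀, hx₀, hmax⟩ :=
    hX.exists_isMaxOn hXne (Metric.continuous_infDist_pt S).continuousOn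
  obtain ⟨j, y, hy, rfl⟩ := mem_iUnion.mp (hXf hx₀)
  have hle : Metric.infDist (f j y) S ≤ K * Metric.infDist (f j y) S :=
    (Metric.infDist_apply_le_mul_of_mapsTo (hf j).2 hS hSne (hfS j) y).trans
      (mul_le_mul_of_nonneg_left (hmax hy) K.coe_nonneg)
  have hK : (K : ℝ) < 1 := (hf j).1
  have hzero : Metric.infDist (f j y) S = 0 := by
    nlinarith [Metric.infDist_nonneg (x := f j y) (s := S)]
  intro x hx
  rw [hS.isClosed.mem_iff_infDist_zero hSne]
  exact le_antisymm ((hmax hx).trans hzero.le) Metric.infDist_nonneg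

end Contraction

theorem norm_smul_add_smul_inner_smul_le {F : Type*} [NormedAddCommGroup F]
    [InnerProductSpace ℝ F] {a b : ℝ} (ha : 0 ≤ a) (hb : 0 ≤ b) (p v : F) :
    ‖a • v + (b / ‖p‖ ^ 2 * inner ℝ p v) • p‖ ≤ (a + b) * ‖v‖ := by
  rcases eq_or_ne p 0 with rfl | hp
  · simp only [inner_zero_left, mul_zero, zero_smul, add_zero, norm_smul, Real.norm_of_nonneg ha]
    exact mul_le_mul_of_nonneg_right (le_add_of_nonneg_right hb) (norm_nonneg v)
  have hp' : 0 < ‖p‖ := norm_pos_iff.mpr hp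
  calc ‖a • v + (b / ‖p‖ ^ 2 * inner ℝ p v) • p‖
      ≤ a * ‖v‖ + b / ‖p‖ ^ 2 * |inner ℝ p v| * ‖p‖ := by
        refine (norm_add_le _ _).trans_eq ?_
        rw [norm_smul, norm_smul, Real.norm_of_nonneg ha, Real.norm_eq_abs, abs_mul,
          abs_of_nonneg (by positivity : 0 ≤ b / ‖p‖ ^ 2)]
    _ ≤ a * ‖v‖ + b / ‖p‖ ^ 2 * (‖p‖ * ‖v‖) * ‖p‖ := by
        gcongr
        exact abs_real_inner_le_norm p v
    _ = (a + b) * ‖v‖ := by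
        field_simp

lemma gPt_apply (N : ℕ) (j k : Fin N) :
    gPt N j k = ((if k = j then 1 else 0) - (N : ℝ)⁻¹) / Real.sqrt 2 := by
  simp [gPt, div_eq_inv_mul]

lemma inner_gPt_gPt (N : ℕ) (hN : N ≠ 0) (i j : Fin N) :
    inner ℝ (gPt N i) (gPt N j) = ((if i = j then 1 else 0) - (N : ℝ)⁻¹) / 2 := by
  have hN' : (N : ℝ) ≠ 0 := by exact_mod_cast hN
  simp only [EuclideanSpace.inner_eq_star_dotProduct, dotProduct, gPt_apply, star_trivial,
    div_mul_div_comm, Real.mul_self_sqrt zero_le_two, ← Finset.sum_div, sub_mul, mul_sub,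
    Finset.sum_sub_distrib]
  simp only [mul_ite, mul_one, mul_zero, ite_mul, one_mul, zero_mul, Finset.sum_ite_eq',
    Finset.mem_univ, if_true, Finset.sum_const, Finset.card_univ, Fintype.card_fin, nsmul_eq_mul]
  field_simp
  ring

lemma norm_gPt_sq (N : ℕ) (hN : N ≠ 0) (j : Fin N) :
    ‖gPt N j‖ ^ 2 = ((N : ℝ) - 1) / (2 * N) := by
  have hN' : (N : ℝ) ≠ 0 := by exact_mod_cast hN
  rw [← real_inner_self_eq_norm_sq, inner_gPt_gPt N hN, if_pos rfl]
  field_simp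

lemma sum_gPt (N : ℕ) (hN : N ≠ 0) : ∑ i, gPt N i = 0 := by
  ext k
  simp [gPt_apply, ← Finset.sum_div, Finset.sum_sub_distrib, hN]

lemma gS_gPt_self (N : ℕ) (hN : 2 ≤ N) (j : Fin N) : gS N j (gPt N j) = gPt N j := by
  have hN' : (N : ℝ) - 1 ≠ 0 := by
    have : (2 : ℝ) ≤ N := by exact_mod_cast hN
    linarith
  rw [gS, inner_gPt_gPt N (by omega), norm_gPt_sq N (by omega), if_pos rfl, ← add_smul]
  convert one_smul ℝ (gPt N j)
  field_simp
  ring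

lemma gS_gPt_of_ne (N : ℕ) (hN : 2 ≤ N) {i j : Fin N} (hij : i ≠ j) :
    gS N j (gPt N i) = ((N : ℝ) + 2)⁻¹ • (gPt N i + gPt N j) := by
  have hN' : (N : ℝ) - 1 ≠ 0 := by
    have : (2 : ℝ) ≤ N := by exact_mod_cast hN
    linarith
  rw [gS, inner_gPt_gPt N (by omega), norm_gPt_sq N (by omega), if_neg hij, smul_add]
  congr 2
  field_simp
  ring

def gSLinear (N : ℕ) (j : Fin N) : E N →ₗ[ℝ] E N :=
  ((N : ℝ) + 2)⁻¹ • LinearMap.id +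
    (((N : ℝ) + 2)⁻¹ * ((N : ℝ) - 1) / ‖gPt N j‖ ^ 2) •
      (innerₛₗ ℝ (gPt N j)).smulRight (gPt N j)

lemma gS_eq_gSLinear_add (N : ℕ) (j : Fin N) (x : E N) :
    gS N j x = gSLinear N j x + (2 * ((N : ℝ) + 2)⁻¹) • gPt N j := by
  simp only [gS, gSLinear, LinearMap.add_apply, LinearMap.smul_apply, LinearMap.id_apply,
    LinearMap.smulRight_apply, innerₛₗ_apply_apply, real_inner_comm x]
  module

lemma norm_gSLinear_apply_le (N : ℕ) (hN : 1 ≤ N) (j : Fin N) (v : E N) :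
    ‖gSLinear N j v‖ ≤ N / (N + 2) * ‖v‖ := by
  have hN' : (1 : ℝ) ≤ N := by exact_mod_cast hN
  have h := norm_smul_add_smul_inner_smul_le (a := ((N : ℝ) + 2)⁻¹)
    (b := ((N : ℝ) + 2)⁻¹ * ((N : ℝ) - 1)) (by positivity)
    (mul_nonneg (by positivity) (by linarith)) (gPt N j) v
  convert h using 1
  · simp only [gSLinear, LinearMap.add_apply, LinearMap.smul_apply, LinearMap.id_apply,
      LinearMap.smulRight_apply, innerₛₗ_apply_apply, smul_smul]
  · field_simp
    ring

lemma contractingWith_gS (N : ℕ) (hN : 1 ≤ N) (j : Fin N) :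
    ContractingWith (N / (N + 2) : ℝ≥0) (gS N j) := by
  refine ⟨(div_lt_one (by positivity)).mpr (by simp), LipschitzWith.of_dist_le_mul fun x y => ?_⟩
  rw [dist_eq_norm, dist_eq_norm, gS_eq_gSLinear_add, gS_eq_gSLinear_add, add_sub_add_right_eq_sub,
    ← map_sub]
  push_cast
  exact norm_gSLinear_apply_le N hN j (x - y)

lemma zero_mem_convexHull_gPt (N : ℕ) (hN : N ≠ 0) : (0 : E N) ∈ convexHull ℝ (range (gPt N)) := by
  have h := Finset.univ.centerMass_mem_convexHull (w := fun _ => (1 : ℝ)) (z := gPt N)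
    (fun _ _ => zero_le_one) (by simpa using Nat.pos_of_ne_zero hN) (fun i _ => mem_range_self i)
  rwa [Finset.centerMass, Finset.sum_congr rfl fun i _ => one_smul ℝ (gPt N i), sum_gPt N hN,
    smul_zero] at h

lemma gS_gPt_mem_convexHull (N : ℕ) (hN : 2 ≤ N) (i j : Fin N) :
    gS N j (gPt N i) ∈ convexHull ℝ (range (gPt N)) := by
  have hconv := convex_convexHull ℝ (range (gPt N))
  have hmem : ∀ k, gPt N k ∈ convexHull ℝ (range (gPt N)) :=
    fun k => subset_convexHull ℝ _ (mem_range_self k)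
  rcases eq_or_ne i j with rfl | hij
  · rw [gS_gPt_self N hN]
    exact hmem i
  have hmid : (2⁻¹ : ℝ) • gPt N i + (2⁻¹ : ℝ) • gPt N j ∈ convexHull ℝ (range (gPt N)) :=
    hconv (hmem i) (hmem j) (by norm_num) (by norm_num) (by norm_num)
  have ht : 2 * ((N : ℝ) + 2)⁻¹ ∈ Icc (0 : ℝ) 1 := by
    constructor
    · positivity
    · rw [← div_eq_mul_inv, div_le_one (by positivity)]
      linarith [(Nat.cast_nonneg N : (0 : ℝ) ≤ N)]
  convert hconv.smul_mem_of_zero_mem (zero_mem_convexHull_gPt N (by omega)) hmid ht using 1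
  rw [gS_gPt_of_ne N hN hij]
  module

lemma mapsTo_gS_convexHull_gPt (N : ℕ) (hN : 2 ≤ N) (j : Fin N) :
    MapsTo (gS N j) (convexHull ℝ (range (gPt N))) (convexHull ℝ (range (gPt N))) := by
  let A : E N →ᵃ[ℝ] E N :=
    (gSLinear N j).toAffineMap + AffineMap.const ℝ (E N) ((2 * ((N : ℝ) + 2)⁻¹) • gPt N j)
  have hA : ⇑A = gS N j := funext fun x => (gS_eq_gSLinear_add N j x).symm
  rw [mapsTo_iff_image_subset, ← hA, A.image_convexHull, ← range_comp]
  refine convexHull_min ?_ (convex_convexHull ℝ _)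
  rintro _ ⟨i, rfl⟩
  exact hA ▸ gS_gPt_mem_convexHull N hN i j

/-- the simplex `Δ = convexHull {p₁,…,p_N}` is invariant under each `S_j`;
consequently any nonempty compact set invariant under all the `S_j` is contained in `Δ`. -/
theorem simplex_invariant (N : ℕ) (hN : 2 ≤ N) :
    (∀ j : Fin N, gS N j '' convexHull ℝ (Set.range (gPt N)) ⊆
      convexHull ℝ (Set.range (gPt N))) ∧
    ∀ X : Set (E N), X.Nonempty → IsCompact X → X = ⋃ j : Fin N, gS N j '' X →
      X ⊆ convexHull ℝ (Set.range (gPt N)) := by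
  have hΔ : IsCompact (convexHull ℝ (range (gPt N))) :=
    (finite_range (gPt N)).isCompact_convexHull ℝ
  have hΔne : (convexHull ℝ (range (gPt N))).Nonempty :=
    ⟨0, zero_mem_convexHull_gPt N (by omega)⟩
  refine ⟨fun j => (mapsTo_gS_convexHull_gPt N hN j).image_subset, fun X _ hX hXS => ?_⟩
  exact subset_of_subset_iUnion_image_of_mapsTo (contractingWith_gS N (by omega)) hΔ hΔne
    (mapsTo_gS_convexHull_gPt N hN) hX hXS.le
end
end
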